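/- Let T be a finite abelian group, K a field of characteristic zero, and S ⊆ T with 2^{2k-1}·|T \ S| < |T|. Suppose f : S → K satisfies f(s) = c₁θ₁(s)+⋯+c_mθ_m(s) on S with m ≤ k, the θᵢ distinct characters of T and cᵢ ≠ 0. Then f is constant on S if and only if m ≤ 1 and θ₁ is the trivial character (the case m = 0 meaning f = 0). -/

import Mathlib

/-!
Robust Artin independence: a relation `∑ c_χ χ = 0` among at most `n + 1` characters that holds
only on a set `A` with `2ⁿ |T \ A| < |T|` already forces all `c_χ = 0`. As in Artin's proof, pick
`l ≠ j` in the relation and `t` with `l t ≠ j t`; subtracting `l t` times the relation from its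
translate by `t` kills `l`, keeps `j` with coefficient `c_j (j t - l t) ≠ 0`, and holds on
`{s ∈ A | s t ∈ A}`, whose complement is at most twice as large. Applying this to
`∑ c_i θ_i - a · 1` on `S`, constancy of `f` makes every `θ_i` trivial, so injectivity forces
`m ≤ 1`.
-/

open Finset

namespace Finset

variable {T : Type*} [Fintype T] [DecidableEq T]

lemma nonempty_of_card_compl_lt {A : Finset T} (h : #Aᶜ < Fintype.card T) : A.Nonempty := by
  rw [← card_compl_lt_iff_nonempty]
  simpa using h

lemma card_compl_filter_mul_mem_le [Group T] (A : Finset T) (t : T) :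
    #(A.filter (· * t ∈ A))ᶜ ≤ 2 * #Aᶜ := by
  have hsub : (A.filter (· * t ∈ A))ᶜ ⊆ Aᶜ ∪ Aᶜ.image (· * t⁻¹) := by
    intro s hs
    by_cases hA : s ∈ A
    · refine mem_union_right _ (mem_image.mpr ⟨s * t, ?_, by simp⟩)
      simpa [hA] using hs
    · exact mem_union_left _ (mem_compl.mpr hA)
  calc #(A.filter (· * t ∈ A))ᶜ ≤ #Aᶜ + #(Aᶜ.image (· * t⁻¹)) :=
        (card_le_card hsub).trans (card_union_le _ _)
    _ ≤ 2 * #Aᶜ := by linarith [card_image_le (s := Aᶜ) (f := (· * t⁻¹))]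

end Finset

namespace MonoidHom

variable {T K : Type*} [Group T] [CommRing K] {D : Finset (T →* Kˣ)} {c : (T →* Kˣ) → K}
  {A : Finset T}

lemma sum_mul_sub_mul_eq_zero_of_translate [DecidableEq T]
    (hvan : ∀ s ∈ A, ∑ χ ∈ D, c χ * χ s = 0) (t : T) (a : K) {s : T}
    (hs : s ∈ A.filter (· * t ∈ A)) :
    ∑ χ ∈ D, c χ * (χ t - a) * χ s = 0 := by
  rw [mem_filter] at hs
  calc ∑ χ ∈ D, c χ * (χ t - a) * χ s
      = ∑ χ ∈ D, c χ * χ (s * t) - a * ∑ χ ∈ D, c χ * χ s := by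
        rw [mul_sum, ← sum_sub_distrib]
        refine sum_congr rfl fun χ _ => ?_
        simp only [map_mul, Units.val_mul]
        ring
    _ = 0 := by rw [hvan _ hs.2, hvan _ hs.1, mul_zero, sub_zero]

lemma coeff_eq_zero_of_subset_singleton {j : T →* Kˣ} (hD : D ⊆ {j}) (hA : A.Nonempty)
    (hvan : ∀ s ∈ A, ∑ χ ∈ D, c χ * χ s = 0) (hj : j ∈ D) : c j = 0 := by
  obtain ⟨s, hs⟩ := hA
  have hDj : D = {j} := subset_antisymm hD (singleton_subset_iff.mpr hj)
  simpa [hDj, Units.ne_zero] using hvan s hs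

lemma coeff_eq_zero_of_sum_mul_eq_zero_on [Fintype T] [DecidableEq T] [NoZeroDivisors K]
    (n : ℕ) (hD : #D ≤ n + 1) (hA : 2 ^ n * #Aᶜ < Fintype.card T)
    (hvan : ∀ s ∈ A, ∑ χ ∈ D, c χ * χ s = 0) :
    ∀ j ∈ D, c j = 0 := by
  classical
  induction n generalizing D c A with
  | zero =>
    intro j hj
    refine coeff_eq_zero_of_subset_singleton (fun χ hχ => ?_)
      (nonempty_of_card_compl_lt (by simpa using hA)) hvan hj
    exact mem_singleton.mpr (card_le_one.mp hD χ hχ j hj)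
  | succ n ih =>
    intro j hj
    by_cases hsingle : D ⊆ {j}
    · exact coeff_eq_zero_of_subset_singleton hsingle
        (nonempty_of_card_compl_lt (lt_of_le_of_lt (Nat.le_mul_of_pos_left _ (by positivity)) hA))
        hvan hj
    obtain ⟨l, hl, hlj⟩ : ∃ l ∈ D, l ≠ j := by simpa [subset_iff] using hsingle
    obtain ⟨t, ht⟩ : ∃ t, l t ≠ j t := DFunLike.ne_iff.mp hlj
    have hjl : (j t : K) - l t ≠ 0 := sub_ne_zero.mpr fun h => ht (Units.ext h).symm
    have hA' : 2 ^ n * #(A.filter (· * t ∈ A))ᶜ < Fintype.card T :=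
      calc 2 ^ n * #(A.filter (· * t ∈ A))ᶜ ≤ 2 ^ n * (2 * #Aᶜ) :=
            Nat.mul_le_mul_left _ (card_compl_filter_mul_mem_le A t)
        _ = 2 ^ (n + 1) * #Aᶜ := by ring
        _ < Fintype.card T := hA
    have hvan' : ∀ s ∈ A.filter (· * t ∈ A),
        ∑ χ ∈ D.erase l, c χ * (χ t - l t) * χ s = 0 := fun s hs => by
      rw [sum_erase _ (by simp)]
      exact sum_mul_sub_mul_eq_zero_of_translate hvan t _ hs
    have hD' : #(D.erase l) ≤ n + 1 := by rw [card_erase_of_mem hl]; omega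
    have := ih hD' hA' hvan' j (mem_erase.mpr ⟨hlj.symm, hj⟩)
    exact (mul_eq_zero.mp this).resolve_right hjl

lemma sum_extend_mul_eq_sum {ι : Type*} [Fintype ι] [DecidableEq (T →* Kˣ)]
    {θ : ι → T →* Kˣ} (hθ : Function.Injective θ) (c : ι → K)
    (hD : univ.image θ ⊆ D) (s : T) :
    ∑ χ ∈ D, Function.extend θ c 0 χ * χ s = ∑ i, c i * θ i s := by
  rw [← sum_subset hD, sum_image fun i _ j _ h => hθ h]
  · simp only [hθ.extend_apply]
  · intro χ _ hχ
    rw [Function.extend_apply' _ _ _ fun ⟨i, hi⟩ => hχ (hi ▸ mem_image_of_mem θ (mem_univ i)),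
      Pi.zero_apply, zero_mul]

end MonoidHom

theorem constant_on_subset_iff_trivial_character_general
    {T K : Type*} [CommGroup T] [Fintype T] [DecidableEq T]
    [Field K]
    (k : ℕ) (S : Finset T)
    (hS : 2 ^ (2 * k - 1) * (Sᶜ).card < Fintype.card T)
    (f : T → K)
    (m : ℕ) (hm : m ≤ k)
    (θ : Fin m → (T →* Kˣ)) (hθ : Function.Injective θ)
    (c : Fin m → K) (hc : ∀ i, c i ≠ 0)
    (hf : ∀ s ∈ S, f s = ∑ i, c i * ((θ i s : Kˣ) : K)) :
    (∃ a : K, ∀ s ∈ S, f s = a) ↔ (m ≤ 1 ∧ ∀ i, θ i = 1) := by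
  classical
  constructor
  · rintro ⟨a, ha⟩
    set D := insert 1 (univ.image θ)
    set g : (T →* Kˣ) → K := fun χ => Function.extend θ c 0 χ - if χ = 1 then a else 0
    have hrel : ∀ s ∈ S, ∑ χ ∈ D, g χ * χ s = 0 := fun s hs => by
      simp only [g, sub_mul, sum_sub_distrib, ite_mul, zero_mul, sum_ite_eq', MonoidHom.one_apply,
        Units.val_one, mul_one]
      rw [if_pos (mem_insert_self _ _), MonoidHom.sum_extend_mul_eq_sum hθ c (subset_insert _ _),
        ← hf s hs, ha s hs, sub_self]
    have hcard : #D ≤ m + 1 :=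
      (card_insert_le _ _).trans (by simpa using card_image_le (s := univ) (f := θ))
    have hbound : 2 ^ m * #Sᶜ < Fintype.card T :=
      lt_of_le_of_lt (Nat.mul_le_mul_right _ (Nat.pow_le_pow_right two_pos (by omega))) hS
    have hzero := MonoidHom.coeff_eq_zero_of_sum_mul_eq_zero_on m hcard hbound hrel
    have htriv : ∀ i, θ i = 1 := fun i => by
      by_contra h
      have := hzero (θ i) (mem_insert_of_mem (mem_image_of_mem θ (mem_univ i)))
      exact hc i (by simpa [g, hθ.extend_apply, h] using this)
    exact ⟨Fin.subsingleton_iff_le_one.mp ⟨fun i j => hθ (by rw [htriv i, htriv j])⟩, htriv⟩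
  · rintro ⟨-, htriv⟩
    exact ⟨∑ i, c i, fun s hs => by simp [hf s hs, htriv]⟩

/-- With `2^(2k-1) * |T \ S| < |T|`, a function given on `S` by a linear
combination of `m ≤ k` distinct characters with nonzero coefficients is
constant on `S` iff `m ≤ 1` and every character appearing is trivial. -/
theorem constant_on_subset_iff_trivial_character
    {T K : Type*} [CommGroup T] [Fintype T] [DecidableEq T]
    [Field K] [CharZero K]
    (k : ℕ) (S : Finset T)
    (hS : 2 ^ (2 * k - 1) * (Sᶜ).card < Fintype.card T)
    (f : T → K)
    (m : ℕ) (hm : m ≤ k)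
    (θ : Fin m → (T →* Kˣ)) (hθ : Function.Injective θ)
    (c : Fin m → K) (hc : ∀ i, c i ≠ 0)
    (hf : ∀ s ∈ S, f s = ∑ i, c i * ((θ i s : Kˣ) : K)) :
    (∃ a : K, ∀ s ∈ S, f s = a) ↔ (m ≤ 1 ∧ ∀ i, θ i = 1) :=
  constant_on_subset_iff_trivial_character_general k S hS f m hm θ hθ c hc hf
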